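/- There exists an absolute constant C₀ > 0 such that for every β ∈ [1,2) and every (c,b) ∈ C(β), writing x = ∑_{i=0}^∞ c_i, one has sup_{α ∈ A(c,b)} P(c,α) ≥ −log₂(5/4) + C₀·(x − 2/5)². -/

import Mathlib

/-- The binary entropy function, `h(p) = p log₂(1/p) + (1-p) log₂(1/(1-p))`,
with the convention `h(0) = h(1) = 0` (automatic since `1/0 = 0` and `logb 2 0 = 0`). -/
noncomputable def binH (p : ℝ) : ℝ :=
  p * Real.logb 2 (1 / p) + (1 - p) * Real.logb 2 (1 / (1 - p))

/-- `(c, b) ∈ C(β)`: `c : ℕ → [0,1]`, `∑ cᵢ/2ⁱ = 1/(β·2ᵇ)` and `∑ cᵢ ≤ 1`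
(the latter expressed via partial sums, which is equivalent for nonnegative terms). -/
def memC (β : ℝ) (c : ℕ → ℝ) (b : ℕ) : Prop :=
  (∀ i, c i ∈ Set.Icc (0 : ℝ) 1) ∧
  (∑' i : ℕ, c i / 2 ^ i) = 1 / (β * 2 ^ b) ∧
  ∀ n : ℕ, (∑ i ∈ Finset.range n, c i) ≤ 1

/-- `α ∈ A(c,b)`: `α : ℕ → [0,1]` with `∑ αᵢ cᵢ / 2ⁱ = 1/(β·2^{b+1})`. -/
def memA (β : ℝ) (b : ℕ) (c α : ℕ → ℝ) : Prop :=
  (∀ i, α i ∈ Set.Icc (0 : ℝ) 1) ∧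
  (∑' i : ℕ, α i * c i / 2 ^ i) = 1 / (β * 2 ^ (b + 1))

/-- `P(c,α) = ∑ h(αᵢ)·cᵢ − h(∑ αᵢ·cᵢ)`. -/
noncomputable def Pfun (c α : ℕ → ℝ) : ℝ :=
  (∑' i : ℕ, binH (α i) * c i) - binH (∑' i : ℕ, α i * c i)

/-- `sup_{α ∈ A(c,b)} P(c,α)`. -/
noncomputable def supP (β : ℝ) (b : ℕ) (c : ℕ → ℝ) : ℝ :=
  sSup {y | ∃ α, memA β b c α ∧ y = Pfun c α}

/-- `G(β) = inf_{(c,b) ∈ C(β)} sup_{α ∈ A(c,b)} P(c,α)`. -/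
noncomputable def Gfun (β : ℝ) : ℝ :=
  sInf {y | ∃ c b, memC β c b ∧ y = supP β b c}

/-!
Choose `αᵢ = 1/2` for every `i`: this halves the weighted sum, so it lies in `A(c,b)`, and since
`h(1/2) = 1` it gives `P(c,α) = x - h(x/2)`. In natural units, `x log 2 - H(x/2)` is minimised at
`x = 2/5`, where it equals `-log(5/4)`. The quadratic gain comes from Gibbs' inequality against
`q = 1/5` with a Hellinger remainder, `a log(b/a) ≤ b - a - (√a - √b)²`, which is `log t ≤ t - 1`
applied at `t = √(b/a)`.
-/

open Real

lemma mul_log_inv_le_mul_log_inv_add_sub_sq_sqrt {a b : ℝ} (ha : 0 ≤ a) (hb : 0 < b) :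
    a * log a⁻¹ ≤ a * log b⁻¹ + (b - a) - (√a - √b) ^ 2 := by
  rcases ha.eq_or_lt with rfl | ha
  · simp [sq_sqrt hb.le]
  have hlog : log (b / a) ≤ 2 * (√(b / a) - 1) := by
    have := log_le_sub_one_of_pos (sqrt_pos.2 (div_pos hb ha))
    rw [log_sqrt (div_pos hb ha).le] at this
    linarith
  have hsplit : a * log a⁻¹ = a * log b⁻¹ + a * log (b / a) := by
    rw [log_div hb.ne' ha.ne', log_inv, log_inv]
    ring
  have hroot : a * √(b / a) = √a * √b := by
    rw [sqrt_div' _ ha.le]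
    field_simp
    rw [sq_sqrt ha.le]
  calc a * log a⁻¹ ≤ a * log b⁻¹ + a * (2 * (√(b / a) - 1)) := by
        rw [hsplit]; gcongr
    _ = a * log b⁻¹ + 2 * (a * √(b / a)) - 2 * a := by ring
    _ = a * log b⁻¹ + (b - a) - (√a - √b) ^ 2 := by
        rw [hroot, sub_sq, sq_sqrt ha.le, sq_sqrt hb.le]
        ring

lemma sq_sub_le_four_mul_sq_sqrt_sub {a b : ℝ} (ha : 0 ≤ a) (ha1 : a ≤ 1) (hb : 0 ≤ b)
    (hb1 : b ≤ 1) : (a - b) ^ 2 ≤ 4 * (√a - √b) ^ 2 := by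
  have hfactor : a - b = (√a - √b) * (√a + √b) := by
    rw [mul_comm, ← sq_sub_sq, sq_sqrt ha, sq_sqrt hb]
  have hsum : (√a + √b) ^ 2 ≤ 4 := by
    nlinarith [sqrt_le_one.2 ha1, sqrt_le_one.2 hb1, sqrt_nonneg a, sqrt_nonneg b]
  rw [hfactor, mul_pow, mul_comm]
  exact mul_le_mul_of_nonneg_right hsum (sq_nonneg _)

lemma binEntropy_le_crossEntropy_sub_sq {p q : ℝ} (hp : p ∈ Set.Icc (0 : ℝ) 1)
    (hq : q ∈ Set.Ioo (0 : ℝ) 1) :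
    binEntropy p ≤ p * log q⁻¹ + (1 - p) * log (1 - q)⁻¹ - (p - q) ^ 2 / 2 := by
  obtain ⟨hp0, hp1⟩ := hp
  obtain ⟨hq0, hq1⟩ := hq
  have h₁ := mul_log_inv_le_mul_log_inv_add_sub_sq_sqrt hp0 hq0
  have h₂ := mul_log_inv_le_mul_log_inv_add_sub_sq_sqrt (sub_nonneg.2 hp1) (sub_pos.2 hq1)
  have h₃ := sq_sub_le_four_mul_sq_sqrt_sub hp0 hp1 hq0.le hq1.le
  have h₄ := sq_sub_le_four_mul_sq_sqrt_sub (sub_nonneg.2 hp1) (by linarith) (sub_nonneg.2 hq1.le)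
    (by linarith)
  rw [show (1 - p - (1 - q)) ^ 2 = (p - q) ^ 2 by ring] at h₄
  unfold binEntropy
  linarith

lemma binEntropy_half_le {x : ℝ} (hx0 : 0 ≤ x) (hx2 : x ≤ 2) :
    binEntropy (x / 2) ≤ log (5 / 4) + x * log 2 - (x - 2 / 5) ^ 2 / 8 := by
  have h := binEntropy_le_crossEntropy_sub_sq (p := x / 2) (q := 1 / 5)
    ⟨by linarith, by linarith⟩ ⟨by norm_num, by norm_num⟩
  have hlog5 : log 5 = log (5 / 4) + 2 * log 2 := by
    rw [← log_rpow two_pos, ← log_mul (by norm_num) (by norm_num)]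
    norm_num
  norm_num [hlog5] at h
  linarith

lemma binH_eq_binEntropy_div (p : ℝ) : binH p = binEntropy p / log 2 := by
  simp only [binH, binEntropy, logb, one_div]
  ring

lemma binH_nonneg {p : ℝ} (hp0 : 0 ≤ p) (hp1 : p ≤ 1) : 0 ≤ binH p := by
  rw [binH_eq_binEntropy_div]
  exact div_nonneg (binEntropy_nonneg hp0 hp1) (log_nonneg one_le_two)

lemma binH_le_one (p : ℝ) : binH p ≤ 1 := by
  rw [binH_eq_binEntropy_div]
  exact (div_le_one (log_pos one_lt_two)).2 binEntropy_le_log_two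

lemma binH_half : binH (1 / 2) = 1 := by
  rw [binH_eq_binEntropy_div, one_div, binEntropy_two_inv, div_self (log_pos one_lt_two).ne']

lemma neg_logb_five_fourths_add_sq_le_sub_binH_half {x : ℝ} (hx0 : 0 ≤ x) (hx2 : x ≤ 2) :
    -logb 2 (5 / 4) + 1 / (8 * log 2) * (x - 2 / 5) ^ 2 ≤ x - binH (x / 2) := by
  have hlog2 : 0 < log 2 := log_pos one_lt_two
  have h := binEntropy_half_le hx0 hx2
  rw [logb, binH_eq_binEntropy_div]
  have lhs : -(log (5 / 4) / log 2) + 1 / (8 * log 2) * (x - 2 / 5) ^ 2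
      = (-log (5 / 4) + (x - 2 / 5) ^ 2 / 8) / log 2 := by
    field_simp
  have rhs : x - binEntropy (x / 2) / log 2 = (x * log 2 - binEntropy (x / 2)) / log 2 := by
    field_simp
  rw [lhs, rhs]
  gcongr
  linarith

lemma tsum_mul_le_tsum {c f : ℕ → ℝ} (hc : ∀ i, 0 ≤ c i) (hs : Summable c)
    (hf0 : ∀ i, 0 ≤ f i) (hf1 : ∀ i, f i ≤ 1) : ∑' i, f i * c i ≤ ∑' i, c i := by
  have hle : ∀ i, f i * c i ≤ c i := fun i => mul_le_of_le_one_left (hc i) (hf1 i)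
  exact (hs.of_nonneg_of_le (fun i => mul_nonneg (hf0 i) (hc i)) hle).tsum_le_tsum hle hs

lemma Pfun_le_tsum {c α : ℕ → ℝ} (hc : ∀ i, 0 ≤ c i) (hs : Summable c)
    (hc1 : ∑' i, c i ≤ 1) (hα : ∀ i, α i ∈ Set.Icc (0 : ℝ) 1) : Pfun c α ≤ ∑' i, c i := by
  have hentropy : ∑' i, binH (α i) * c i ≤ ∑' i, c i :=
    tsum_mul_le_tsum hc hs (fun i => binH_nonneg (hα i).1 (hα i).2) (fun i => binH_le_one _)
  have hmass : ∑' i, α i * c i ≤ ∑' i, c i :=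
    tsum_mul_le_tsum hc hs (fun i => (hα i).1) (fun i => (hα i).2)
  have hmass0 : 0 ≤ ∑' i, α i * c i := tsum_nonneg fun i => mul_nonneg (hα i).1 (hc i)
  have := binH_nonneg hmass0 (hmass.trans hc1)
  unfold Pfun
  linarith

lemma Pfun_le_supP {β : ℝ} {b : ℕ} {c α : ℕ → ℝ} (hc : ∀ i, 0 ≤ c i) (hs : Summable c)
    (hc1 : ∑' i, c i ≤ 1) (hα : memA β b c α) : Pfun c α ≤ supP β b c := by
  refine le_csSup ⟨∑' i, c i, ?_⟩ ⟨α, hα, rfl⟩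
  rintro _ ⟨α', hα', rfl⟩
  exact Pfun_le_tsum hc hs hc1 hα'.1

lemma Pfun_const_half (c : ℕ → ℝ) :
    Pfun c (fun _ => 1 / 2) = ∑' i, c i - binH ((∑' i, c i) / 2) := by
  simp only [Pfun, binH_half, one_mul, one_div_mul_eq_div, tsum_div_const]

lemma memA_const_half {β : ℝ} {b : ℕ} {c : ℕ → ℝ}
    (hc : ∑' i, c i / 2 ^ i = 1 / (β * 2 ^ b)) : memA β b c (fun _ => 1 / 2) := by
  refine ⟨fun _ => ⟨by norm_num, by norm_num⟩, ?_⟩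
  simp only [mul_div_assoc, tsum_mul_left, hc, pow_succ]
  ring

/-- There is an absolute `C₀ > 0` such that for all `β ∈ [1,2)` and `(c,b) ∈ C(β)`,
writing `x = ∑ cᵢ`, we have `sup_{α ∈ A(c,b)} P(c,α) ≥ −log₂(5/4) + C₀(x − 2/5)²`. -/
theorem supP_ge_quadratic :
    ∃ C₀ > (0 : ℝ), ∀ β ∈ Set.Ico (1 : ℝ) 2, ∀ c : ℕ → ℝ, ∀ b : ℕ, memC β c b →
      -(Real.logb 2 (5 / 4)) + C₀ * ((∑' i : ℕ, c i) - 2 / 5) ^ 2 ≤ supP β b c := by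
  refine ⟨1 / (8 * log 2), by positivity, ?_⟩
  rintro β - c b ⟨hc01, hweighted, hpartial⟩
  have hc : ∀ i, 0 ≤ c i := fun i => (hc01 i).1
  have hs : Summable c := summable_of_sum_range_le hc hpartial
  have hc1 : ∑' i, c i ≤ 1 := tsum_le_of_sum_range_le hc hpartial
  calc _ ≤ ∑' i, c i - binH ((∑' i, c i) / 2) :=
        neg_logb_five_fourths_add_sq_le_sub_binH_half (tsum_nonneg hc) (by linarith)
    _ = Pfun c (fun _ => 1 / 2) := (Pfun_const_half c).symm
    _ ≤ supP β b c := Pfun_le_supP hc hs hc1 (memA_const_half hweighted)
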